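/- For all x, y ∈ Hⁿ, setting a = P₁(x, y) and b = P₂(x, y), one has f(a, b) = 64/⟨x+y, e⟩² = 64/(x₀ + y₀)², where f(a, b) = (2+‖a‖+‖b‖)(2−‖a‖+‖b‖)(2+‖a‖−‖b‖)(2−‖a‖−‖b‖). -/

import Mathlib

open scoped BigOperators

noncomputable section

/-- The Minkowski product on `ℝ^{n+1}`: `⟨x,y⟩ = -x₀y₀ + ∑_{i=1}^n xᵢyᵢ`. -/
def mink {n : ℕ} (x y : Fin (n + 1) → ℝ) : ℝ :=
  -(x 0 * y 0) + ∑ i : Fin n, x i.succ * y i.succ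

/-- The vector `e = (1, 0, …, 0)` in `ℝ^{n+1}`. -/
def eVec (n : ℕ) : Fin (n + 1) → ℝ := fun i => if i = 0 then 1 else 0

/-- Projection `𝒫 : ℝ^{n+1} → ℝⁿ`, forgetting the 0-th coordinate, landing in
Euclidean space (with the Euclidean norm). -/
def proj {n : ℕ} (x : Fin (n + 1) → ℝ) : EuclideanSpace ℝ (Fin n) :=
  WithLp.toLp 2 (fun i : Fin n => x i.succ)

/-- The hyperboloid model `Hⁿ = {x : ⟨x,x⟩ = -1, x₀ > 0}`. -/
def Hyp (n : ℕ) : Set (Fin (n + 1) → ℝ) := {x | mink x x = -1 ∧ 0 < x 0}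

/-- First component of the Pogorelov map: `P₁(x,y) = 2𝒫(x)/(-⟨x+y,e⟩)`. -/
def P1 {n : ℕ} (x y : Fin (n + 1) → ℝ) : EuclideanSpace ℝ (Fin n) :=
  (2 / (-(mink (x + y) (eVec n)))) • proj x

/-- Second component of the Pogorelov map: `P₂(x,y) = 2𝒫(y)/(-⟨x+y,e⟩)`. -/
def P2 {n : ℕ} (x y : Fin (n + 1) → ℝ) : EuclideanSpace ℝ (Fin n) :=
  (2 / (-(mink (x + y) (eVec n)))) • proj y

/-- The function `f(a,b) = (2+‖a‖+‖b‖)(2-‖a‖+‖b‖)(2+‖a‖-‖b‖)(2-‖a‖-‖b‖)`. -/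
def fQ {n : ℕ} (a b : EuclideanSpace ℝ (Fin n)) : ℝ :=
  (2 + ‖a‖ + ‖b‖) * (2 - ‖a‖ + ‖b‖) * (2 + ‖a‖ - ‖b‖) * (2 - ‖a‖ - ‖b‖)

/-- The vector in `ℝ^{n+1}` with 0-th coordinate `t` and `𝒫`-projection `v`. -/
def liftVec {n : ℕ} (t : ℝ) (v : EuclideanSpace ℝ (Fin n)) : Fin (n + 1) → ℝ :=
  Fin.cons t (fun i => v i)

/-- First component of `Ψ(a,b)`, namely `(√(‖x̂‖²+1), x̂)` with `x̂ = 4a/√f(a,b)`. -/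
def Psi1 {n : ℕ} (a b : EuclideanSpace ℝ (Fin n)) : Fin (n + 1) → ℝ :=
  liftVec (Real.sqrt (‖(4 / Real.sqrt (fQ a b)) • a‖ ^ 2 + 1)) ((4 / Real.sqrt (fQ a b)) • a)

/-- Second component of `Ψ(a,b)`, namely `(√(‖ŷ‖²+1), ŷ)` with `ŷ = 4b/√f(a,b)`. -/
def Psi2 {n : ℕ} (a b : EuclideanSpace ℝ (Fin n)) : Fin (n + 1) → ℝ :=
  liftVec (Real.sqrt (‖(4 / Real.sqrt (fQ a b)) • b‖ ^ 2 + 1)) ((4 / Real.sqrt (fQ a b)) • b)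

theorem norm_smul_sq {E : Type*} [SeminormedAddCommGroup E] [NormedSpace ℝ E] (c : ℝ) (v : E) :
    ‖c • v‖ ^ 2 = c ^ 2 * ‖v‖ ^ 2 := by
  rw [norm_smul, mul_pow, Real.norm_eq_abs, sq_abs]

section

variable {n : ℕ}

theorem mink_eVec (x : Fin (n + 1) → ℝ) : mink x (eVec n) = -x 0 := by
  simp [mink, eVec, Fin.succ_ne_zero]

theorem norm_proj_sq (x : Fin (n + 1) → ℝ) : ‖proj x‖ ^ 2 = mink x x + x 0 ^ 2 := by
  rw [EuclideanSpace.norm_sq_eq, mink]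
  simp only [proj, PiLp.toLp_apply, Real.norm_eq_abs, sq_abs]
  simp only [sq]
  ring

theorem norm_proj_sq_of_mem_Hyp {x : Fin (n + 1) → ℝ} (hx : x ∈ Hyp n) :
    ‖proj x‖ ^ 2 = x 0 ^ 2 - 1 := by
  rw [norm_proj_sq, hx.1]
  ring

theorem P1_eq (x y : Fin (n + 1) → ℝ) : P1 x y = (2 / (x 0 + y 0)) • proj x := by
  rw [P1, mink_eVec, Pi.add_apply, neg_neg]

theorem P2_eq (x y : Fin (n + 1) → ℝ) : P2 x y = (2 / (x 0 + y 0)) • proj y := by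
  rw [P2, mink_eVec, Pi.add_apply, neg_neg]

theorem fQ_eq (a b : EuclideanSpace ℝ (Fin n)) :
    fQ a b = (4 + ‖b‖ ^ 2 - ‖a‖ ^ 2) ^ 2 - 16 * ‖b‖ ^ 2 := by
  rw [fQ]
  ring

/-- With `s = x₀ + y₀` and `‖𝒫x‖² = x₀² - 1`, `‖𝒫y‖² = y₀² - 1`, the bracket in `fQ_eq` becomes
`4 + 4 (y₀² - x₀²) / s² = 8 y₀ / s`, and `64 y₀² / s² - 64 (y₀² - 1) / s² = 64 / s²`. -/
theorem fQ_P1_P2_of_mem_Hyp {x y : Fin (n + 1) → ℝ} (hx : x ∈ Hyp n) (hy : y ∈ Hyp n) :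
    fQ (P1 x y) (P2 x y) = 64 / (x 0 + y 0) ^ 2 := by
  have hs : x 0 + y 0 ≠ 0 := by linarith [hx.2, hy.2]
  rw [fQ_eq, P1_eq, P2_eq, norm_smul_sq, norm_smul_sq, norm_proj_sq_of_mem_Hyp hx,
    norm_proj_sq_of_mem_Hyp hy]
  field_simp
  ring

end

theorem statement_16_general {n : ℕ} (x y : Fin (n + 1) → ℝ)
    (hx : x ∈ Hyp n) (hy : y ∈ Hyp n) :
    fQ (P1 x y) (P2 x y) = 64 / (mink (x + y) (eVec n)) ^ 2 ∧
    fQ (P1 x y) (P2 x y) = 64 / (x 0 + y 0) ^ 2 := by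
  have h := fQ_P1_P2_of_mem_Hyp hx hy
  refine ⟨?_, h⟩
  rw [h, mink_eVec, Pi.add_apply, neg_sq]

/-- for `x, y ∈ Hⁿ` and `(a,b) = Φ(x,y)`, one has
`f(a,b) = 64/⟨x+y,e⟩² = 64/(x₀+y₀)²`. -/
theorem statement_16 {n : ℕ} (hn : 1 ≤ n) (x y : Fin (n + 1) → ℝ)
    (hx : x ∈ Hyp n) (hy : y ∈ Hyp n) :
    fQ (P1 x y) (P2 x y) = 64 / (mink (x + y) (eVec n)) ^ 2 ∧
    fQ (P1 x y) (P2 x y) = 64 / (x 0 + y 0) ^ 2 :=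
  statement_16_general x y hx hy
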